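/- Let G = P_s □ P_t be a grid graph with s, t ≥ 2, and let k be an integer with 2 ≤ k ≤ s + t − 2. Then every k-resolving set for G has size at least 2k. -/

import Mathlib

/-- A finset `S` of vertices is a `k`-resolving set for `G`: any two distinct vertices `u, w`
have different distances to at least `k` vertices of `S`. -/
def IsKResolvingSet {V : Type*} [DecidableEq V] (G : SimpleGraph V) (k : ℕ) (S : Finset V) : Prop :=
  ∀ u w : V, u ≠ w → k ≤ (S.filter (fun v => G.dist u v ≠ G.dist w v)).card

/-!
If no vertex resolves both of two pairs of distinct vertices, the two sets of
resolving vertices inside a `k`-resolving set `S` are disjoint and each has at least `k` elements,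
so `S` has at least `2k` elements. In a grid the two diagonals of any unit square are such pairs,
because grid distance is the ℓ¹ distance of the coordinates.
-/

open SimpleGraph

theorem IsKResolvingSet.two_mul_le_card {V : Type*} [DecidableEq V] {G : SimpleGraph V}
    {k : ℕ} {S : Finset V} (hS : IsKResolvingSet G k S) {u w u' w' : V}
    (huw : u ≠ w) (huw' : u' ≠ w')
    (h : ∀ v, G.dist u v = G.dist w v ∨ G.dist u' v = G.dist w' v) :
    2 * k ≤ S.card := by
  have hdisj : Disjoint (S.filter fun v => G.dist u v ≠ G.dist w v)
      (S.filter fun v => G.dist u' v ≠ G.dist w' v) := by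
    rw [Finset.disjoint_filter]
    intro v _ hv hv'
    exact (h v).elim hv hv'
  calc 2 * k ≤ (S.filter fun v => G.dist u v ≠ G.dist w v).card
        + (S.filter fun v => G.dist u' v ≠ G.dist w' v).card :=
        two_mul k ▸ add_le_add (hS u w huw) (hS u' w' huw')
    _ = (S.filter fun v => G.dist u v ≠ G.dist w v ∨ G.dist u' v ≠ G.dist w' v).card := by
        rw [Finset.filter_or, Finset.card_union_of_disjoint hdisj]
    _ ≤ S.card := Finset.card_filter_le _ _

namespace SimpleGraph

theorem dist_boxProd {α β : Type*} {G : SimpleGraph α} {H : SimpleGraph β} {x y : α × β}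
    (hG : G.Reachable x.1 y.1) (hH : H.Reachable x.2 y.2) :
    (G □ H).dist x y = G.dist x.1 y.1 + H.dist x.2 y.2 := by
  have hGH : (G □ H).Reachable x y := reachable_boxProd.2 ⟨hG, hH⟩
  apply Nat.cast_injective (R := ℕ∞)
  push_cast
  rw [hGH.coe_dist_eq_edist, hG.coe_dist_eq_edist, hH.coe_dist_eq_edist, edist_boxProd]

theorem Walk.natDist_le_length_pathGraph {n : ℕ} {i j : Fin n} (p : (pathGraph n).Walk i j) :
    Nat.dist i j ≤ p.length := by
  induction p with
  | nil => simp
  | cons hadj _ ih =>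
    rw [pathGraph_adj] at hadj
    rw [Walk.length_cons]
    unfold Nat.dist at *
    omega

theorem pathGraph_dist_le {n : ℕ} : ∀ (d : ℕ) (i j : Fin n), i.val + d = j.val →
    (pathGraph n).dist i j ≤ d
  | 0, i, j, h => by rw [Fin.ext (by omega : i.val = j.val), dist_self]
  | d + 1, i, j, h => by
    let i' : Fin n := ⟨i.val + 1, by omega⟩
    have hadj : (pathGraph n).Adj i i' := pathGraph_adj.2 (Or.inl rfl)
    obtain ⟨p, hp⟩ := (pathGraph_preconnected n i' j).exists_walk_length_eq_dist
    calc (pathGraph n).dist i j ≤ (Walk.cons hadj p).length := dist_le _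
      _ ≤ d + 1 := by
        rw [Walk.length_cons, hp]
        exact Nat.succ_le_succ (pathGraph_dist_le d i' j (by simp only [i']; omega))

theorem pathGraph_dist {n : ℕ} (i j : Fin n) : (pathGraph n).dist i j = Nat.dist i j := by
  apply le_antisymm
  · rcases le_total i.val j.val with hij | hij
    · exact (pathGraph_dist_le (j.val - i.val) i j (by omega)).trans_eq
        (by unfold Nat.dist; omega)
    · rw [dist_comm]
      exact (pathGraph_dist_le (i.val - j.val) j i (by omega)).trans_eq
        (by unfold Nat.dist; omega)
  · obtain ⟨p, hp⟩ := (pathGraph_preconnected n i j).exists_walk_length_eq_dist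
    exact hp ▸ p.natDist_le_length_pathGraph

theorem dist_pathGraph_boxProd_pathGraph {s t : ℕ} (x y : Fin s × Fin t) :
    (pathGraph s □ pathGraph t).dist x y = Nat.dist x.1 y.1 + Nat.dist x.2 y.2 := by
  rw [dist_boxProd (pathGraph_preconnected s _ _) (pathGraph_preconnected t _ _),
    pathGraph_dist, pathGraph_dist]

/-- With `f p = |p| - |p - 1| = ±1`, a vertex `v` resolves the diagonal `{(i, j'), (i', j)}` iff
`f (v.1 - i) ≠ f (v.2 - j)`, and the diagonal `{(i, j), (i', j')}` iff `f (v.1 - i) = f (v.2 - j)`. -/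
theorem dist_pathGraph_boxProd_pathGraph_diagonals {s t : ℕ} {i i' : Fin s} {j j' : Fin t}
    (hi : i'.val = i.val + 1) (hj : j'.val = j.val + 1) (v : Fin s × Fin t) :
    (pathGraph s □ pathGraph t).dist (i, j') v = (pathGraph s □ pathGraph t).dist (i', j) v ∨
      (pathGraph s □ pathGraph t).dist (i, j) v = (pathGraph s □ pathGraph t).dist (i', j') v := by
  simp only [dist_pathGraph_boxProd_pathGraph]
  unfold Nat.dist
  omega

end SimpleGraph

theorem grid_kResolvingSet_lower_bound_general (s t : ℕ) (hs : 2 ≤ s) (ht : 2 ≤ t)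
    (k : ℕ)
    (S : Finset (Fin s × Fin t))
    (hS : IsKResolvingSet ((SimpleGraph.pathGraph s).boxProd (SimpleGraph.pathGraph t)) k S) :
    2 * k ≤ S.card := by
  let i₀ : Fin s := ⟨0, by omega⟩
  let i₁ : Fin s := ⟨1, by omega⟩
  let j₀ : Fin t := ⟨0, by omega⟩
  let j₁ : Fin t := ⟨1, by omega⟩
  exact hS.two_mul_le_card (u := (i₀, j₁)) (w := (i₁, j₀)) (u' := (i₀, j₀)) (w' := (i₁, j₁))
    (by simp [i₀, i₁, Fin.ext_iff]) (by simp [i₀, i₁, Fin.ext_iff])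
    (dist_pathGraph_boxProd_pathGraph_diagonals rfl rfl)

/-- In the grid graph `P_s □ P_t` with `s, t ≥ 2`, for any `k` with `2 ≤ k ≤ s + t - 2`,
every `k`-resolving set has size at least `2k`. -/
theorem grid_kResolvingSet_lower_bound (s t : ℕ) (hs : 2 ≤ s) (ht : 2 ≤ t)
    (k : ℕ) (hk1 : 2 ≤ k) (hk2 : k ≤ s + t - 2)
    (S : Finset (Fin s × Fin t))
    (hS : IsKResolvingSet ((SimpleGraph.pathGraph s).boxProd (SimpleGraph.pathGraph t)) k S) :
    2 * k ≤ S.card :=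
  grid_kResolvingSet_lower_bound_general s t hs ht k S hS
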